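/- Fix σ² > 0, P_I > 0, matrices F (N_I × M_E) and H (N_I × M_I), and define R(S_E, S_I) = log₂ det(I + (F S_E Fᴴ + σ² I)^{-1} H S_I Hᴴ). Let S_E* be an M_E × M_E positive semidefinite matrix with tr(S_E*) = P_E > 0, spectral decomposition S_E* = Σ_{i=1}^{d} γ_i w_i w_iᴴ (γ_i > 0, w_i orthonormal), t_i = γ_i T / P_E with T > 0, and S_{E,i} = P_E w_i w_iᴴ. Then sup over d-tuples (S_{I,1}, …, S_{I,d}) of positive semidefinite matrices with tr(S_{I,i}) ≤ P_I of (1/T) Σ_{i=1}^{d} t_i R(S_{E,i}, S_{I,i}) is at least sup over positive semidefinite S_I with tr(S_I) ≤ P_I of R(S_E*, S_I). -/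

import Mathlib

/-! Keeping the information covariance `S_I` fixed in every sub-block reduces the claim to
convexity of `X ↦ log det (X + A) - log det X` on positive definite matrices: with
`X_i = F S_{E,i} Fᴴ + σ² I` and weights `t_i / T = γ_i / P_E`, the interference-plus-noise
covariance of the multi-beam scheme is `∑ i, (t_i / T) • X_i`. Simultaneous diagonalisation of
two positive definite matrices reduces convexity to diagonal `X = diag c`, where expanding the
determinant along the diagonal gives
`det (diag c + A) / det (diag c) = ∑ s, det A[s,s] / ∏ k ∈ s, c k`.
Each `1 / ∏ k ∈ s, c k` is log-convex in `c` by AM-GM, and a nonnegative combination of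
log-convex functions is log-convex by Hölder. The feasible set lies in a compact box, so the rate
is bounded on it and the supremum on the right is not the junk value of an unbounded set. -/

open Matrix BigOperators ComplexOrder

/-- The achievable rate `R(S_E, S_I) = log₂ det(I + (F S_E Fᴴ + σ² I)⁻¹ H S_I Hᴴ)` of the
MIMO WIT link (in bps/Hz). -/
noncomputable def rateR {NI MEdim MI : ℕ} (σsq : ℝ)
    (F : Matrix (Fin NI) (Fin MEdim) ℂ) (H : Matrix (Fin NI) (Fin MI) ℂ)
    (SE : Matrix (Fin MEdim) (Fin MEdim) ℂ) (SI : Matrix (Fin MI) (Fin MI) ℂ) : ℝ :=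
  Real.logb 2 ((1 + (F * SE * Fᴴ + (σsq : ℂ) • 1)⁻¹ * (H * SI * Hᴴ)).det.re)

theorem Matrix.det_add_diagonal {n R : Type*} [Fintype n] [DecidableEq n] [CommRing R]
    (B : Matrix n n R) (c : n → R) :
    (B + diagonal c).det =
      ∑ s : Finset n, (∏ k ∈ sᶜ, c k) * (B.submatrix ((↑) : s → n) (↑)).det := by
  let D := (detRowAlternating : (n → R) [⋀^n]→ₗ[R] R).toMultilinearMap
  have hrows : ∀ s : Finset n, s.piecewise B.row (diagonal c).row =
      sᶜ.piecewise (fun i => c i • s.piecewise B.row (row 1) i) (s.piecewise B.row (row 1)) := by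
    intro s
    funext i j
    by_cases hi : i ∈ s <;> simp [Finset.piecewise, hi, row, diagonal_apply, one_apply]
  refine (D.map_add_univ B.row (diagonal c).row).trans (Finset.sum_congr rfl fun s _ => ?_)
  rw [hrows, D.map_piecewise_smul, smul_eq_mul, ← det_piecewise_one_eq_submatrix_det]
  rfl

theorem Matrix.trace_sum_smul_vecMulVec_self_star {ι m : Type*} [Fintype ι] [Fintype m]
    (γ : ι → ℝ) {w : ι → m → ℂ} (hw : ∀ i, star (w i) ⬝ᵥ w i = 1) :
    (∑ i, (γ i : ℂ) • vecMulVec (w i) (star (w i))).trace = ∑ i, (γ i : ℂ) := by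
  simp only [trace_sum, trace_smul, trace_vecMulVec, dotProduct_comm (w _), hw, smul_eq_mul,
    mul_one]

theorem Matrix.PosSemidef.norm_apply_le_re_trace {m : Type*} [Fintype m] {S : Matrix m m ℂ}
    (hS : S.PosSemidef) (i j : m) : ‖S i j‖ ≤ S.trace.re := by
  have hdiag : ∀ k, 0 ≤ (S k k).re ∧ S k k = ((S k k).re : ℂ) := fun k =>
    have h := Complex.nonneg_iff.mp (hS.diag_nonneg (i := k))
    ⟨h.1, Complex.ext rfl (by simp [← h.2])⟩
  have hle : ∀ k, (S k k).re ≤ S.trace.re := fun k => by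
    rw [trace, Complex.re_sum]
    exact Finset.single_le_sum (f := fun k => (S k k).re) (fun k _ => (hdiag k).1)
      (Finset.mem_univ k)
  have hminor : ‖S i j‖ ^ 2 ≤ (S i i).re * (S j j).re := by
    have h := (hS.submatrix ![i, j]).det_nonneg
    rw [det_fin_two] at h
    simp only [submatrix_apply, Matrix.cons_val_zero, Matrix.cons_val_one] at h
    rw [← hS.1.apply j i] at h
    rw [(hdiag i).2, (hdiag j).2, show star (S i j) = (starRingEnd ℂ) (S i j) from rfl,
      Complex.mul_conj, Complex.normSq_eq_norm_sq, ← Complex.ofReal_mul,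
      ← Complex.ofReal_sub, Complex.zero_le_real] at h
    linarith
  nlinarith [hle i, hle j, (hdiag i).1, (hdiag j).1, norm_nonneg (S i j)]

theorem Real.sum_rpow_mul_rpow_le {ι : Type*} (s : Finset ι) {f g : ι → ℝ}
    (hf : ∀ i ∈ s, 0 ≤ f i) (hg : ∀ i ∈ s, 0 ≤ g i) {a b : ℝ} (ha : 0 < a) (hb : 0 < b)
    (hab : a + b = 1) :
    ∑ i ∈ s, f i ^ a * g i ^ b ≤ (∑ i ∈ s, f i) ^ a * (∑ i ∈ s, g i) ^ b := by
  have h := Real.inner_le_Lp_mul_Lq_of_nonneg s (Real.HolderConjugate.inv_inv ha hb hab)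
    (fun i hi => Real.rpow_nonneg (hf i hi) a) (fun i hi => Real.rpow_nonneg (hg i hi) b)
  simp only [one_div, inv_inv] at h
  convert h using 3 <;> refine Finset.sum_congr rfl fun i hi => ?_
  · rw [Real.rpow_rpow_inv (hf i hi) ha.ne']
  · rw [Real.rpow_rpow_inv (hg i hi) hb.ne']

theorem Real.prod_rpow_mul_prod_rpow_le {κ : Type*} (s : Finset κ) {c₁ c₂ : κ → ℝ}
    (hc₁ : ∀ k, 0 < c₁ k) (hc₂ : ∀ k, 0 < c₂ k) {a b : ℝ} (ha : 0 < a) (hb : 0 < b)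
    (hab : a + b = 1) :
    (∏ k ∈ s, c₁ k) ^ a * (∏ k ∈ s, c₂ k) ^ b ≤ ∏ k ∈ s, (a * c₁ k + b * c₂ k) := by
  rw [← Real.finsetProd_rpow _ _ (fun k _ => (hc₁ k).le),
    ← Real.finsetProd_rpow _ _ (fun k _ => (hc₂ k).le), ← Finset.prod_mul_distrib]
  refine Finset.prod_le_prod (fun k _ => ?_) fun k _ =>
    Real.geom_mean_le_arith_mean2_weighted ha.le hb.le (hc₁ k).le (hc₂ k).le hab
  exact mul_nonneg (Real.rpow_nonneg (hc₁ k).le a) (Real.rpow_nonneg (hc₂ k).le b)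

theorem Real.sum_div_prod_le_rpow_mul_rpow {κ : Type*} [Fintype κ] {m : Finset κ → ℝ}
    (hm : ∀ s, 0 ≤ m s) {c₁ c₂ : κ → ℝ} (hc₁ : ∀ k, 0 < c₁ k) (hc₂ : ∀ k, 0 < c₂ k)
    {a b : ℝ} (ha : 0 < a) (hb : 0 < b) (hab : a + b = 1) :
    ∑ s, m s / ∏ k ∈ s, (a * c₁ k + b * c₂ k)
      ≤ (∑ s, m s / ∏ k ∈ s, c₁ k) ^ a * (∑ s, m s / ∏ k ∈ s, c₂ k) ^ b := by
  refine le_trans (Finset.sum_le_sum fun s _ => ?_) (Real.sum_rpow_mul_rpow_le _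
    (fun s _ => div_nonneg (hm s) (Finset.prod_nonneg fun k _ => (hc₁ k).le))
    (fun s _ => div_nonneg (hm s) (Finset.prod_nonneg fun k _ => (hc₂ k).le)) ha hb hab)
  have hP₁ : 0 < ∏ k ∈ s, c₁ k := Finset.prod_pos fun k _ => hc₁ k
  have hP₂ : 0 < ∏ k ∈ s, c₂ k := Finset.prod_pos fun k _ => hc₂ k
  calc m s / ∏ k ∈ s, (a * c₁ k + b * c₂ k)
      ≤ m s / ((∏ k ∈ s, c₁ k) ^ a * (∏ k ∈ s, c₂ k) ^ b) :=
        div_le_div_of_nonneg_left (hm s) (by positivity)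
          (Real.prod_rpow_mul_prod_rpow_le s hc₁ hc₂ ha hb hab)
    _ = (m s / ∏ k ∈ s, c₁ k) ^ a * (m s / ∏ k ∈ s, c₂ k) ^ b := by
        rw [Real.div_rpow (hm s) hP₁.le, Real.div_rpow (hm s) hP₂.le, div_mul_div_comm,
          ← Real.rpow_add' (hm s) (by linarith), hab, Real.rpow_one]

theorem Matrix.conj_conj_inv_cancel {n K : Type*} [Fintype n] [DecidableEq n] [Field K]
    [StarRing K] {V : Matrix n n K} (hV : IsUnit V) (A : Matrix n n K) :
    V * (V⁻¹ * A * V⁻¹ᴴ) * Vᴴ = A := by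
  have h := mul_nonsing_inv V ((isUnit_iff_isUnit_det V).mp hV)
  rw [← Matrix.mul_assoc, ← Matrix.mul_assoc, h, Matrix.one_mul, Matrix.mul_assoc,
    ← conjTranspose_mul, h, conjTranspose_one, Matrix.mul_one]

section LogDetGain

variable {n : Type*} [Fintype n] [DecidableEq n]

open scoped MatrixOrder in
theorem Matrix.PosDef.exists_eq_mul_conjTranspose {X : Matrix n n ℂ} (hX : X.PosDef) :
    ∃ V : Matrix n n ℂ, IsUnit V ∧ X = V * Vᴴ := by
  obtain ⟨R, hR⟩ := CStarAlgebra.nonneg_iff_eq_star_mul_self.mp hX.posSemidef.nonneg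
  refine ⟨Rᴴ, ?_, by rw [hR, conjTranspose_conjTranspose, star_eq_conjTranspose]⟩
  have h := hX.isUnit
  rw [hR, star_eq_conjTranspose] at h
  exact isUnit_of_mul_isUnit_left h

theorem Matrix.PosDef.exists_simultaneous_diagonalization {X Y : Matrix n n ℂ}
    (hX : X.PosDef) (hY : Y.PosDef) :
    ∃ (V : Matrix n n ℂ) (e : n → ℝ), IsUnit V ∧ (∀ k, 0 < e k) ∧
      X = V * Vᴴ ∧ Y = V * diagonal (fun k => (e k : ℂ)) * Vᴴ := by
  obtain ⟨W, hW, rfl⟩ := hX.exists_eq_mul_conjTranspose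
  have hM : (W⁻¹ * Y * W⁻¹ᴴ).PosDef :=
    (IsUnit.posDef_star_right_conjugate_iff (isUnit_nonsing_inv_iff.mpr hW)).mpr hY
  set U : Matrix n n ℂ := (hM.1.eigenvectorUnitary : Matrix n n ℂ)
  have hU : U * Uᴴ = 1 := Unitary.mul_star_self_of_mem hM.1.eigenvectorUnitary.2
  refine ⟨W * U, hM.1.eigenvalues, hW.mul (Unitary.toUnits hM.1.eigenvectorUnitary).isUnit,
    hM.eigenvalues_pos, ?_, ?_⟩
  · rw [conjTranspose_mul, Matrix.mul_assoc, ← Matrix.mul_assoc U, hU, Matrix.one_mul]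
  · calc Y = W * (W⁻¹ * Y * W⁻¹ᴴ) * Wᴴ := (conj_conj_inv_cancel hW Y).symm
      _ = W * (U * diagonal (fun k => (hM.1.eigenvalues k : ℂ)) * Uᴴ) * Wᴴ :=
          congrArg (fun Z => W * Z * Wᴴ) hM.1.spectral_theorem
      _ = _ := by rw [conjTranspose_mul]; simp only [Matrix.mul_assoc]

theorem Matrix.PosDef.re_det_pos {X : Matrix n n ℂ} (hX : X.PosDef) : 0 < X.det.re :=
  (Complex.lt_def.mp hX.det_pos).1

omit [Fintype n] in
theorem Matrix.posDef_diagonal_ofReal {c : n → ℝ} (hc : ∀ k, 0 < c k) :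
    (diagonal fun k => (c k : ℂ)).PosDef :=
  posDef_diagonal_iff.mpr fun k => Complex.zero_lt_real.mpr (hc k)

noncomputable def logDetGain (A X : Matrix n n ℂ) : ℝ :=
  Real.log (X + A).det.re - Real.log X.det.re

theorem logDetGain_eq_log_div {A X : Matrix n n ℂ} (hA : A.PosSemidef) (hX : X.PosDef) :
    logDetGain A X = Real.log ((X + A).det.re / X.det.re) :=
  (Real.log_div (hX.add_posSemidef hA).re_det_pos.ne' hX.re_det_pos.ne').symm

theorem logDetGain_conj {A X V : Matrix n n ℂ} (hA : A.PosSemidef) (hX : X.PosDef)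
    (hV : IsUnit V) :
    logDetGain (V * A * Vᴴ) (V * X * Vᴴ) = logDetGain A X := by
  have hdet : ∀ M : Matrix n n ℂ, (V * M * Vᴴ).det.re = Complex.normSq V.det * M.det.re := by
    intro M
    rw [det_mul, det_mul, det_conjTranspose, mul_right_comm,
      show star V.det = (starRingEnd ℂ) V.det from rfl, Complex.mul_conj, Complex.re_ofReal_mul]
  have hnormSq : Complex.normSq V.det ≠ 0 :=
    (Complex.normSq_pos.mpr ((isUnit_iff_isUnit_det V).mp hV).ne_zero).ne'
  rw [logDetGain, logDetGain, ← Matrix.add_mul, ← Matrix.mul_add, hdet, hdet,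
    Real.log_mul hnormSq (hX.add_posSemidef hA).re_det_pos.ne',
    Real.log_mul hnormSq hX.re_det_pos.ne']
  ring

theorem re_det_diagonal_add_div (B : Matrix n n ℂ) {c : n → ℝ} (hc : ∀ k, 0 < c k) :
    (diagonal (fun k => (c k : ℂ)) + B).det.re / (diagonal (fun k => (c k : ℂ))).det.re =
      ∑ s : Finset n, (B.submatrix ((↑) : s → n) (↑)).det.re / ∏ k ∈ s, c k := by
  rw [add_comm, det_add_diagonal, det_diagonal, ← Complex.ofReal_prod, Complex.ofReal_re,
    Complex.re_sum, Finset.sum_div]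
  refine Finset.sum_congr rfl fun s _ => ?_
  rw [← Complex.ofReal_prod, Complex.re_ofReal_mul, ← Finset.prod_mul_prod_compl s c]
  have hs : (∏ k ∈ s, c k) ≠ 0 := (Finset.prod_pos fun k _ => hc k).ne'
  have hsc : (∏ k ∈ sᶜ, c k) ≠ 0 := (Finset.prod_pos fun k _ => hc k).ne'
  field_simp

theorem logDetGain_diagonal_smul_add_smul_le {B : Matrix n n ℂ} (hB : B.PosSemidef)
    {c₁ c₂ : n → ℝ} (hc₁ : ∀ k, 0 < c₁ k) (hc₂ : ∀ k, 0 < c₂ k) {a b : ℝ} (ha : 0 < a)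
    (hb : 0 < b) (hab : a + b = 1) :
    logDetGain B (diagonal fun k => ((a * c₁ k + b * c₂ k : ℝ) : ℂ)) ≤
      a * logDetGain B (diagonal fun k => (c₁ k : ℂ)) +
        b * logDetGain B (diagonal fun k => (c₂ k : ℂ)) := by
  have hgain : ∀ c : n → ℝ, (∀ k, 0 < c k) →
      logDetGain B (diagonal fun k => (c k : ℂ)) =
        Real.log (∑ s : Finset n, (B.submatrix ((↑) : s → n) (↑)).det.re / ∏ k ∈ s, c k) ∧
      0 < ∑ s : Finset n, (B.submatrix ((↑) : s → n) (↑)).det.re / ∏ k ∈ s, c k := by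
    intro c hc
    have hD := posDef_diagonal_ofReal hc
    rw [← re_det_diagonal_add_div B hc]
    exact ⟨logDetGain_eq_log_div hB hD,
      div_pos (hD.add_posSemidef hB).re_det_pos hD.re_det_pos⟩
  have hc : ∀ k, 0 < a * c₁ k + b * c₂ k := fun k => by
    have := hc₁ k; have := hc₂ k; positivity
  obtain ⟨h, hpos⟩ := hgain _ hc
  obtain ⟨h₁, hpos₁⟩ := hgain _ hc₁
  obtain ⟨h₂, hpos₂⟩ := hgain _ hc₂
  rw [h, h₁, h₂, ← Real.log_rpow hpos₁, ← Real.log_rpow hpos₂,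
    ← Real.log_mul (by positivity) (by positivity)]
  exact Real.log_le_log hpos (Real.sum_div_prod_le_rpow_mul_rpow
    (fun s => (Complex.nonneg_iff.mp (hB.submatrix _).det_nonneg).1) hc₁ hc₂ ha hb hab)

theorem logDetGain_smul_add_smul_le {A X Y : Matrix n n ℂ} (hA : A.PosSemidef) (hX : X.PosDef)
    (hY : Y.PosDef) {a b : ℝ} (ha : 0 < a) (hb : 0 < b) (hab : a + b = 1) :
    logDetGain A (a • X + b • Y) ≤ a * logDetGain A X + b * logDetGain A Y := by
  obtain ⟨V, e, hV, he, rfl, rfl⟩ := hX.exists_simultaneous_diagonalization hY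
  have hB : (V⁻¹ * A * V⁻¹ᴴ).PosSemidef := hA.mul_mul_conjTranspose_same _
  have hone : V * Vᴴ = V * diagonal (fun _ => ((1 : ℝ) : ℂ)) * Vᴴ := by simp
  have hcomb : a • (V * Vᴴ) + b • (V * diagonal (fun k => (e k : ℂ)) * Vᴴ) =
      V * diagonal (fun k => ((a * 1 + b * e k : ℝ) : ℂ)) * Vᴴ := by
    have hd : diagonal (fun k => ((a * 1 + b * e k : ℝ) : ℂ)) =
        a • (1 : Matrix n n ℂ) + b • diagonal (fun k => (e k : ℂ)) := by
      ext i j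
      by_cases h : i = j <;> simp [h, Complex.real_smul]
    rw [hd, Matrix.mul_add, Matrix.add_mul, Matrix.mul_smul, Matrix.mul_smul, Matrix.smul_mul,
      Matrix.smul_mul, Matrix.mul_one]
  have he' : ∀ k, 0 < a * 1 + b * e k := fun k => by have := he k; positivity
  rw [hcomb, hone, ← conj_conj_inv_cancel hV A,
    logDetGain_conj hB (posDef_diagonal_ofReal he') hV,
    logDetGain_conj hB (posDef_diagonal_ofReal fun _ => one_pos) hV,
    logDetGain_conj hB (posDef_diagonal_ofReal he) hV]
  exact logDetGain_diagonal_smul_add_smul_le hB (fun _ => one_pos) he ha hb hab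

omit [Fintype n] [DecidableEq n] in
theorem convex_setOf_posDef : Convex ℝ {X : Matrix n n ℂ | X.PosDef} :=
  convex_iff_forall_pos.mpr fun _ hX _ hY _ _ ha hb _ => (hX.smul ha).add (hY.smul hb)

theorem convexOn_logDetGain {A : Matrix n n ℂ} (hA : A.PosSemidef) :
    ConvexOn ℝ {X : Matrix n n ℂ | X.PosDef} (logDetGain A) :=
  convexOn_iff_forall_pos.mpr ⟨convex_setOf_posDef,
    fun _ hX _ hY _ _ ha hb hab => logDetGain_smul_add_smul_le hA hX hY ha hb hab⟩

theorem logb_re_det_one_add_inv_mul {A X : Matrix n n ℂ} (hA : A.PosSemidef) (hX : X.PosDef) :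
    Real.logb 2 (1 + X⁻¹ * A).det.re = logDetGain A X / Real.log 2 := by
  have hXdet : X.det = (X.det.re : ℂ) :=
    Complex.ext rfl (by simp [← (Complex.lt_def.mp hX.det_pos).2])
  rw [show 1 + X⁻¹ * A = X⁻¹ * (X + A) by
      rw [Matrix.mul_add, nonsing_inv_mul X ((isUnit_iff_isUnit_det X).mp hX.isUnit)],
    det_mul, det_nonsing_inv, Ring.inverse_eq_inv', hXdet, ← Complex.ofReal_inv,
    Complex.re_ofReal_mul, inv_mul_eq_div, Real.logb, logDetGain_eq_log_div hA hX]

theorem Matrix.PosSemidef.posDef_mul_mul_conjTranspose_add_smul_one {m : Type*} [Fintype m]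
    {S : Matrix m m ℂ} (hS : S.PosSemidef) (F : Matrix n m ℂ) {σsq : ℝ} (hσ : 0 < σsq) :
    (F * S * Fᴴ + (σsq : ℂ) • 1).PosDef :=
  (PosDef.one.smul (Complex.zero_lt_real.mpr hσ)).posSemidef_add
    (hS.mul_mul_conjTranspose_same F)

end LogDetGain

section Rate

variable {NI ME MI : ℕ} (σsq : ℝ) (F : Matrix (Fin NI) (Fin ME) ℂ)
  (H : Matrix (Fin NI) (Fin MI) ℂ)

theorem rateR_eq_logDetGain {SE : Matrix (Fin ME) (Fin ME) ℂ} {SI : Matrix (Fin MI) (Fin MI) ℂ}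
    (hX : (F * SE * Fᴴ + (σsq : ℂ) • 1).PosDef) (hSI : SI.PosSemidef) :
    rateR σsq F H SE SI = logDetGain (H * SI * Hᴴ) (F * SE * Fᴴ + (σsq : ℂ) • 1) / Real.log 2 :=
  logb_re_det_one_add_inv_mul (hSI.mul_mul_conjTranspose_same H) hX

theorem rateR_sum_smul_le {ι : Type*} [Fintype ι] (hσ : 0 < σsq)
    {SE : ι → Matrix (Fin ME) (Fin ME) ℂ} (hSE : ∀ i, (SE i).PosSemidef) {w : ι → ℝ}
    (hw₀ : ∀ i, 0 ≤ w i) (hw₁ : ∑ i, w i = 1) {SI : Matrix (Fin MI) (Fin MI) ℂ}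
    (hSI : SI.PosSemidef) :
    rateR σsq F H (∑ i, w i • SE i) SI ≤ ∑ i, w i * rateR σsq F H (SE i) SI := by
  set X := fun i => F * SE i * Fᴴ + (σsq : ℂ) • 1
  have hX : ∀ i, (X i).PosDef := fun i =>
    (hSE i).posDef_mul_mul_conjTranspose_add_smul_one F hσ
  have hsum : F * (∑ i, w i • SE i) * Fᴴ + (σsq : ℂ) • 1 = ∑ i, w i • X i := by
    simp only [X, smul_add, Finset.sum_add_distrib, ← Finset.sum_smul, hw₁, one_smul,
      Matrix.mul_sum, Matrix.sum_mul, Matrix.mul_smul, Matrix.smul_mul]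
  have hXsum : (∑ i, w i • X i).PosDef :=
    convex_setOf_posDef.sum_mem (fun i _ => hw₀ i) hw₁ fun i _ => hX i
  rw [rateR_eq_logDetGain σsq F H (hsum ▸ hXsum) hSI, hsum]
  simp only [rateR_eq_logDetGain σsq F H (hX _) hSI, mul_div_assoc', ← Finset.sum_div]
  gcongr
  simpa only [smul_eq_mul] using
    (convexOn_logDetGain (hSI.mul_mul_conjTranspose_same H)).map_sum_le
      (fun i _ => hw₀ i) hw₁ fun i _ => hX i

theorem bddAbove_rateR (SE : Matrix (Fin ME) (Fin ME) ℂ) (P : ℝ) :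
    BddAbove (rateR σsq F H SE '' {SI | SI.PosSemidef ∧ SI.trace.re ≤ P}) := by
  set K := Set.univ.pi fun _ : Fin MI => Set.univ.pi fun _ : Fin MI => Metric.closedBall (0 : ℂ) P
  obtain ⟨B, hB⟩ := (isCompact_univ_pi fun _ => isCompact_univ_pi fun _ =>
      isCompact_closedBall 0 P).exists_bound_of_continuousOn
    (f := fun SI : Matrix (Fin MI) (Fin MI) ℂ =>
      (1 + (F * SE * Fᴴ + (σsq : ℂ) • 1)⁻¹ * (H * SI * Hᴴ)).det.re) (by fun_prop)
  refine ⟨B / Real.log 2, ?_⟩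
  rintro _ ⟨SI, ⟨hSI, htr⟩, rfl⟩
  have hSIK : SI ∈ K := Set.mem_univ_pi.mpr fun i => Set.mem_univ_pi.mpr fun j =>
    mem_closedBall_zero_iff.mpr ((hSI.norm_apply_le_re_trace i j).trans htr)
  have hSIB := hB SI hSIK
  rw [Real.norm_eq_abs] at hSIB
  rw [rateR, Real.logb, ← Real.log_abs]
  gcongr
  exact (Real.log_le_self (abs_nonneg _)).trans hSIB

theorem bddAbove_mul_sum_rateR {ι : Type*} [Fintype ι] (SE : ι → Matrix (Fin ME) (Fin ME) ℂ)
    (P : ℝ) {a : ℝ} (ha : 0 ≤ a) {c : ι → ℝ} (hc : ∀ i, 0 ≤ c i) :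
    BddAbove {x : ℝ | ∃ SIs : ι → Matrix (Fin MI) (Fin MI) ℂ,
      (∀ i, (SIs i).PosSemidef ∧ (SIs i).trace.re ≤ P) ∧
        x = a * ∑ i, c i * rateR σsq F H (SE i) (SIs i)} := by
  choose B hB using fun i => bddAbove_rateR σsq F H (SE i) P
  refine ⟨a * ∑ i, c i * B i, ?_⟩
  rintro _ ⟨SIs, hSIs, rfl⟩
  gcongr with i
  · exact hc i
  · exact hB i ⟨SIs i, hSIs i, rfl⟩

end Rate

theorem single_beam_rate_at_least_multi_beam_general
    (NI MEdim MI d : ℕ) (σsq PI PE T : ℝ)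
    (hσ : 0 < σsq) (hPI : 0 < PI) (hPE : 0 < PE) (hT : 0 < T)
    (F : Matrix (Fin NI) (Fin MEdim) ℂ) (H : Matrix (Fin NI) (Fin MI) ℂ)
    (SEstar : Matrix (Fin MEdim) (Fin MEdim) ℂ)
    (htr : SEstar.trace = (PE : ℂ))
    (γ : Fin d → ℝ) (hγ : ∀ i, 0 < γ i)
    (w : Fin d → (Fin MEdim → ℂ))
    (horth : ∀ i j, star (w i) ⬝ᵥ w j = if i = j then 1 else 0)
    (hdecomp : SEstar = ∑ i, (γ i : ℂ) • vecMulVec (w i) (star (w i)))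
    (t : Fin d → ℝ) (ht : ∀ i, t i = γ i * T / PE)
    (SEi : Fin d → Matrix (Fin MEdim) (Fin MEdim) ℂ)
    (hSEi : ∀ i, SEi i = (PE : ℂ) • vecMulVec (w i) (star (w i))) :
    sSup {x : ℝ | ∃ SI : Matrix (Fin MI) (Fin MI) ℂ,
        SI.PosSemidef ∧ SI.trace.re ≤ PI ∧ x = rateR σsq F H SEstar SI}
      ≤ sSup {x : ℝ | ∃ SIs : Fin d → Matrix (Fin MI) (Fin MI) ℂ,
        (∀ i, (SIs i).PosSemidef ∧ (SIs i).trace.re ≤ PI) ∧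
          x = (1 / T) * ∑ i, t i * rateR σsq F H (SEi i) (SIs i)} := by
  have hw₀ : ∀ i, 0 ≤ γ i / PE := fun i => (div_pos (hγ i) hPE).le
  have hγsum : ∑ i, γ i = PE := by
    exact_mod_cast (trace_sum_smul_vecMulVec_self_star γ fun i => by
      simpa using horth i i).symm.trans (hdecomp ▸ htr)
  have hw₁ : ∑ i, γ i / PE = 1 := by rw [← Finset.sum_div, hγsum, div_self hPE.ne']
  have hSE : SEstar = ∑ i, (γ i / PE) • SEi i := by
    rw [hdecomp]
    refine Finset.sum_congr rfl fun i _ => ?_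
    rw [hSEi, ← Complex.coe_smul, smul_smul]
    congr 1
    push_cast
    field_simp
  have hSEi_psd : ∀ i, (SEi i).PosSemidef := fun i => by
    rw [hSEi]
    exact (posSemidef_vecMulVec_self_star (w i)).smul (Complex.zero_le_real.mpr hPE.le)
  have hweights : ∀ i, 1 / T * t i = γ i / PE := fun i => by rw [ht]; field_simp
  have ht₀ : ∀ i, 0 ≤ t i := fun i => by rw [ht]; exact (div_pos (mul_pos (hγ i) hT) hPE).le
  refine csSup_le ⟨_, 0, PosSemidef.zero, by simpa using hPI.le, rfl⟩ ?_
  rintro _ ⟨SI, hSI, htrSI, rfl⟩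
  refine le_csSup_of_le (bddAbove_mul_sum_rateR σsq F H SEi PI (by positivity) ht₀)
    ⟨fun _ => SI, fun _ => ⟨hSI, htrSI⟩, rfl⟩ ?_
  rw [Finset.mul_sum]
  simp only [← mul_assoc, hweights, hSE]
  exact rateR_sum_smul_le σsq F H hσ hSEi_psd hw₀ hw₁ hSI

/-- **Proposition 4.3.** Under the single-beam time-sharing WET scheme (rank-one
covariances `S_{E,i} = P_E w_i w_iᴴ` on sub-blocks of lengths `t_i = γ_i T / P_E`), the
maximum average WIT rate over per-sub-block information covariances (problem (P3)) is at
least the maximum WIT rate under the multi-beam covariance `S_E*` (problem (P2)). -/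
theorem single_beam_rate_at_least_multi_beam
    (NI MEdim MI d : ℕ) (σsq PI PE T : ℝ)
    (hσ : 0 < σsq) (hPI : 0 < PI) (hPE : 0 < PE) (hT : 0 < T)
    (F : Matrix (Fin NI) (Fin MEdim) ℂ) (H : Matrix (Fin NI) (Fin MI) ℂ)
    (SEstar : Matrix (Fin MEdim) (Fin MEdim) ℂ) (hSEstar : SEstar.PosSemidef)
    (htr : SEstar.trace = (PE : ℂ))
    (γ : Fin d → ℝ) (hγ : ∀ i, 0 < γ i)
    (w : Fin d → (Fin MEdim → ℂ))
    (horth : ∀ i j, star (w i) ⬝ᵥ w j = if i = j then 1 else 0)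
    (hdecomp : SEstar = ∑ i, (γ i : ℂ) • vecMulVec (w i) (star (w i)))
    (t : Fin d → ℝ) (ht : ∀ i, t i = γ i * T / PE)
    (SEi : Fin d → Matrix (Fin MEdim) (Fin MEdim) ℂ)
    (hSEi : ∀ i, SEi i = (PE : ℂ) • vecMulVec (w i) (star (w i))) :
    sSup {x : ℝ | ∃ SI : Matrix (Fin MI) (Fin MI) ℂ,
        SI.PosSemidef ∧ SI.trace.re ≤ PI ∧ x = rateR σsq F H SEstar SI}
      ≤ sSup {x : ℝ | ∃ SIs : Fin d → Matrix (Fin MI) (Fin MI) ℂ,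
        (∀ i, (SIs i).PosSemidef ∧ (SIs i).trace.re ≤ PI) ∧
          x = (1 / T) * ∑ i, t i * rateR σsq F H (SEi i) (SIs i)} :=
  single_beam_rate_at_least_multi_beam_general NI MEdim MI d σsq PI PE T hσ hPI hPE hT F H SEstar
    htr γ hγ w horth hdecomp t ht SEi hSEi
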